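/- The function f₀(x) = (1/π)·(√((2−|x|)/|x|) − arctan(√((2−|x|)/|x|)))·1_{[−2,2]}(x) is nonnegative and integrates to 1 over ℝ. -/

import Mathlib

/-!
On `[0, 2]` the density is `π⁻¹ (t - arctan t)` with `t = √((2 - x) / x)`, nonnegative because
`arctan t ≤ t`. Since `arctan √((2 - x) / x) = arccos √(x / 2)`, the function
`G x = 3/2 √(x (2 - x)) - (1 + x) arccos √(x / 2)` is a primitive of `t - arctan t` that is
continuous on all of `[0, 2]`, so `∫₀² = G 2 - G 0 = π / 2`. Evenness doubles this to `π`.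
-/

open Real

/-- Stationary-type density for the triggered shot noise at order l = 2. -/
noncomputable def f0 (x : ℝ) : ℝ :=
  Set.indicator (Set.Icc (-2 : ℝ) 2)
    (fun x => 1 / π * (Real.sqrt ((2 - |x|) / |x|) - Real.arctan (Real.sqrt ((2 - |x|) / |x|)))) x

open Set intervalIntegral MeasureTheory

theorem intervalIntegral.integral_neg_self_of_even {E : Type*} [NormedAddCommGroup E]
    [NormedSpace ℝ E] {f : ℝ → E} (hf : f.Even) {a : ℝ} (hfi : IntervalIntegrable f volume 0 a) :
    ∫ x in -a..a, f x = 2 • ∫ x in 0..a, f x := by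
  have hneg : ∫ x in -a..0, f x = ∫ x in 0..a, f x := by
    simpa [hf.eq] using (integral_comp_neg (a := 0) (b := a) f).symm
  have hfi' : IntervalIntegrable f volume (-a) 0 := by
    simpa [hf.eq] using ((IntervalIntegrable.iff_comp_neg (by finiteness)).1 hfi).symm
  rw [← integral_add_adjacent_intervals hfi' hfi, two_nsmul, hneg]

theorem Real.arctan_le_self {t : ℝ} (ht : 0 ≤ t) : arctan t ≤ t :=
  calc arctan t ≤ tan (arctan t) := le_tan (arctan_nonneg.2 ht) (arctan_lt_pi_div_two t)
    _ = t := tan_arctan t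

theorem Real.arccos_sqrt_eq_arctan {y : ℝ} (hy : 0 < y) :
    arccos √y = arctan √((1 - y) / y) := by
  rw [arccos_eq_arctan (sqrt_pos.2 hy), sq_sqrt hy.le, sqrt_div' _ hy.le]

theorem Real.hasDerivAt_arccos_sqrt_half {x : ℝ} (hx : x ∈ Ioo (0 : ℝ) 2) :
    HasDerivAt (fun x => arccos √(x / 2)) (-1 / (2 * √(x * (2 - x)))) x := by
  obtain ⟨hx0, hx2⟩ := hx
  have hlt : √(x / 2) < 1 := (sqrt_lt' one_pos).2 (by linarith)
  have h := (hasDerivAt_arccos (by linarith [sqrt_nonneg (x / 2)]) hlt.ne).comp x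
    (((hasDerivAt_id' x).div_const 2).sqrt (by positivity))
  refine h.congr_deriv ?_
  have hsplit : √(x * (2 - x)) = 2 * (√(1 - x / 2) * √(x / 2)) := by
    rw [← sqrt_mul (by linarith), show x * (2 - x) = 2 ^ 2 * ((1 - x / 2) * (x / 2)) by ring,
      sqrt_mul (by positivity), sqrt_sq (by norm_num)]
  have : 0 < √(1 - x / 2) := sqrt_pos.2 (by linarith)
  have : 0 < √(x / 2) := sqrt_pos.2 (by linarith)
  rw [sq_sqrt (by positivity), hsplit]
  field_simp

noncomputable def densityProfile (x : ℝ) : ℝ := √((2 - x) / x) - arctan √((2 - x) / x)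

theorem densityProfile_nonneg (x : ℝ) : 0 ≤ densityProfile x :=
  sub_nonneg.2 (arctan_le_self (sqrt_nonneg _))

noncomputable def densityProfilePrimitive (x : ℝ) : ℝ :=
  3 / 2 * √(x * (2 - x)) - (1 + x) * arccos √(x / 2)

theorem continuous_densityProfilePrimitive : Continuous densityProfilePrimitive := by
  unfold densityProfilePrimitive
  fun_prop

theorem hasDerivAt_densityProfilePrimitive {x : ℝ} (hx : x ∈ Ioo (0 : ℝ) 2) :
    HasDerivAt densityProfilePrimitive (densityProfile x) x := by
  obtain ⟨hx0, hx2⟩ := hx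
  have hpos : 0 < x * (2 - x) := by nlinarith
  have hpoly : HasDerivAt (fun y => y * (2 - y)) (2 - 2 * x) x :=
    ((hasDerivAt_id' x).mul ((hasDerivAt_id' x).const_sub 2)).congr_deriv (by ring)
  have h := ((hpoly.sqrt hpos.ne').const_mul (3 / 2)).sub
    (((hasDerivAt_id' x).const_add 1).mul (hasDerivAt_arccos_sqrt_half ⟨hx0, hx2⟩))
  refine h.congr_deriv ?_
  have harctan : arctan √((2 - x) / x) = arccos √(x / 2) := by
    rw [arccos_sqrt_eq_arctan (by positivity)]
    congr 2
    field_simp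
  have hsqrt : √((2 - x) / x) = (2 - x) / √(x * (2 - x)) := by
    have : 0 < √(2 - x) := sqrt_pos.2 (by linarith)
    have : 0 < √x := sqrt_pos.2 hx0
    rw [sqrt_mul hx0.le, sqrt_div (by linarith)]
    field_simp
    exact sq_sqrt (by linarith)
  have : 0 < √(x * (2 - x)) := sqrt_pos.2 hpos
  rw [densityProfile, harctan, hsqrt]
  field_simp
  ring

theorem intervalIntegrable_densityProfile : IntervalIntegrable densityProfile volume 0 2 :=
  intervalIntegrable_deriv_of_nonneg continuous_densityProfilePrimitive.continuousOn
    (by simpa using fun x hx => hasDerivAt_densityProfilePrimitive hx)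
    (fun x _ => densityProfile_nonneg x)

theorem integral_densityProfile : ∫ x in (0 : ℝ)..2, densityProfile x = π / 2 := by
  rw [integral_eq_sub_of_hasDerivAt_of_le zero_le_two
    continuous_densityProfilePrimitive.continuousOn
    (fun x hx => hasDerivAt_densityProfilePrimitive hx) intervalIntegrable_densityProfile]
  norm_num [densityProfilePrimitive]

theorem f0_eq_ite (x : ℝ) : f0 x = if |x| ≤ 2 then 1 / π * densityProfile |x| else 0 := by
  simp only [f0, densityProfile, indicator_apply, mem_Icc, abs_le]

theorem f0_even : f0.Even := fun x => by simp only [f0_eq_ite, abs_neg]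

theorem f0_eqOn_uIcc : EqOn f0 (fun x => 1 / π * densityProfile x) (uIcc 0 2) := fun x hx => by
  rw [uIcc_of_le zero_le_two] at hx
  simp [f0_eq_ite, abs_of_nonneg hx.1, hx.2]

theorem f0_triggered_is_density :
    (∀ x : ℝ, 0 ≤ f0 x) ∧ (∫ x in (-2 : ℝ)..2, f0 x) = 1 := by
  constructor
  · intro x
    rw [f0_eq_ite]
    split_ifs
    exacts [mul_nonneg (by positivity) (densityProfile_nonneg _), le_rfl]
  · have hint : IntervalIntegrable f0 volume 0 2 :=
      (intervalIntegrable_densityProfile.const_mul _).congr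
        (f0_eqOn_uIcc.symm.mono uIoc_subset_uIcc)
    rw [integral_neg_self_of_even f0_even hint, integral_congr f0_eqOn_uIcc,
      intervalIntegral.integral_const_mul, integral_densityProfile, nsmul_eq_mul,
      Nat.cast_ofNat]
    field_simp
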